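/- arXiv:2207.08459 — 2 statements merged into one kernel-verified Lean document; each statement's English description precedes it below -/
import Mathlib

section
/- Let ((L,≤_L),(P_n)_{n∈ℕ}) be a grain line and P a (finite) path in the graph ⋃P. If P contains at least one edge whose P-depth is greater than the P-depth of each of the two endvertices of P, then P contains as a subpath a P-segment whose P-depth equals the maximum of the P-depths of the edges of P. -/
open SimpleGraph

/-- Two walks (with arbitrary endpoints) are edge-disjoint. -/
def EdgeDisjW {V : Type*} {G : SimpleGraph V} {a b c d : V}
    (p : G.Walk a b) (q : G.Walk c d) : Prop :=
  ∀ e, e ∈ p.edges → e ∉ q.edges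

/-- A graph is infinitely edge-connected: it has at least two vertices and
between any two distinct vertices there are infinitely many pairwise
edge-disjoint paths. -/
def InfEdgeConn {V : Type*} (G : SimpleGraph V) : Prop :=
  (∃ u v : V, u ≠ v) ∧
    ∀ u v : V, u ≠ v →
      ∃ P : ℕ → G.Walk u v,
        (∀ n, (P n).IsPath) ∧ ∀ m n, m ≠ n → EdgeDisjW (P m) (P n)

/-- Infinite edge-connectivity of the subgraph spanned by a vertex set `S`
(used for graphs of the form "union of a family of paths", whose abstract
vertex set is `S`). -/
def InfEdgeConnOn {V : Type*} (G : SimpleGraph V) (S : Set V) : Prop :=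
  (∃ u ∈ S, ∃ v ∈ S, u ≠ v) ∧
    ∀ u ∈ S, ∀ v ∈ S, u ≠ v →
      ∃ P : ℕ → G.Walk u v,
        (∀ n, (P n).IsPath) ∧ ∀ m n, m ≠ n → EdgeDisjW (P m) (P n)

/-- `α` together with the family of paths `P` (one for each edge of `H`)
is a strong immersion of `H` in `G`. -/
def IsStrongImmersion {VH VG : Type*} (H : SimpleGraph VH) (G : SimpleGraph VG)
    (α : VH → VG) (P : ∀ ⦃u v : VH⦄, H.Adj u v → G.Walk (α u) (α v)) : Prop :=
  Function.Injective α ∧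
  (∀ ⦃u v : VH⦄ (h : H.Adj u v), (P h).IsPath) ∧
  (∀ ⦃u v u' v' : VH⦄ (h : H.Adj u v) (h' : H.Adj u' v'),
      s(u, v) ≠ s(u', v') → EdgeDisjW (P h) (P h')) ∧
  (∀ ⦃u v : VH⦄ (h : H.Adj u v), ∀ w ∈ (P h).support,
      (∃ z, α z = w) → w = α u ∨ w = α v)

/-- `H` is strongly immersed in `G`. -/
def StronglyImmersed {VH VG : Type*} (H : SimpleGraph VH) (G : SimpleGraph VG) : Prop :=
  ∃ α P, IsStrongImmersion H G α P

/-- `β` together with the family of paths `P` witnesses that `G` contains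
a subdivision of `H`: the paths are internally disjoint and have no internal
vertex among the branch vertices. -/
def IsSubdivision {VH VG : Type*} (H : SimpleGraph VH) (G : SimpleGraph VG)
    (β : VH → VG) (P : ∀ ⦃u v : VH⦄, H.Adj u v → G.Walk (β u) (β v)) : Prop :=
  Function.Injective β ∧
  (∀ ⦃u v : VH⦄ (h : H.Adj u v), (P h).IsPath) ∧
  (∀ ⦃u v u' v' : VH⦄ (h : H.Adj u v) (h' : H.Adj u' v'),
      s(u, v) ≠ s(u', v') → ∀ w, w ∈ (P h).support → w ∈ (P h').support →
        (w = β u ∨ w = β v) ∧ (w = β u' ∨ w = β v')) ∧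
  (∀ ⦃u v : VH⦄ (h : H.Adj u v), ∀ w ∈ (P h).support,
      (∃ z, β z = w) → w = β u ∨ w = β v)

/-- `H` is a topological minor of `G`. -/
def TopMinor {VH VG : Type*} (H : SimpleGraph VH) (G : SimpleGraph VG) : Prop :=
  ∃ β P, IsSubdivision H G β P

/-- The dyadic rationals of the unit interval: the vertices of the halved
Farey graph. -/
def DyadicSet : Set ℚ := {q | ∃ n k : ℕ, k ≤ 2 ^ n ∧ q = (k : ℚ) / 2 ^ n}

/-- The halved Farey graph: two dyadic rationals of `[0,1]` are adjacent iff
they are of the form `k/2^n` and `(k+1)/2^n`. -/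
def halvedFarey : SimpleGraph DyadicSet where
  Adj a b := a ≠ b ∧ ∃ n k : ℕ, k + 1 ≤ 2 ^ n ∧
    ((a.1 = (k : ℚ) / 2 ^ n ∧ b.1 = ((k : ℚ) + 1) / 2 ^ n) ∨
     (b.1 = (k : ℚ) / 2 ^ n ∧ a.1 = ((k : ℚ) + 1) / 2 ^ n))
  symm := ⟨by
    rintro a b ⟨hne, n, k, hk, h⟩
    exact ⟨hne.symm, n, k, hk, h.symm⟩⟩
  loopless := ⟨by rintro a ⟨hne, -⟩; exact hne rfl⟩

/-- Adjacency in the Farey graph on `ℚ ∪ {∞}` (`none` is `∞ = ±1/0`). -/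
def fareyAdj : Option ℚ → Option ℚ → Prop
  | some q, some r =>
      q.num * (r.den : ℤ) - r.num * (q.den : ℤ) = 1 ∨
      q.num * (r.den : ℤ) - r.num * (q.den : ℤ) = -1
  | some q, none => q.den = 1
  | none, some r => r.den = 1
  | none, none => False

/-- The Farey graph. -/
def fareyGraph : SimpleGraph (Option ℚ) where
  Adj := fareyAdj
  symm := ⟨by
    rintro (_ | q) (_ | r) h <;> simp only [fareyAdj] at * <;> omega⟩
  loopless := ⟨by
    rintro (_ | q) h <;> simp only [fareyAdj] at h <;> omega⟩
/-- `u` occurs strictly before `v` on the list `l`. -/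
def Before {V : Type*} (l : List V) (u v : V) : Prop := List.Sublist [u, v] l

/-- `l` is the (consecutive) portion of the list `R` starting at `u` and
ending at `v`. -/
def IsPortion {V : Type*} (R : List V) (u v : V) (l : List V) : Prop :=
  (∃ pre post, R = pre ++ l ++ post) ∧ l.head? = some u ∧ l.getLast? = some v

/-- The union of a family of walks, as a graph on the ambient vertex set
(its abstract vertex set is `walkSupp P`). -/
def walkUnion {V : Type*} {G : SimpleGraph V} {x y : V}
    (P : ℕ → G.Walk x y) : SimpleGraph V where
  Adj u v := ∃ n, s(u, v) ∈ (P n).edges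
  symm := ⟨by
    rintro u v ⟨n, h⟩
    exact ⟨n, by rwa [Sym2.eq_swap]⟩⟩
  loopless := ⟨by
    rintro v ⟨n, h⟩
    exact G.loopless.irrefl v ((P n).edges_subset_edgeSet h)⟩

/-- The vertices appearing on some walk of the family. -/
def walkSupp {V : Type*} {G : SimpleGraph V} {x y : V}
    (P : ℕ → G.Walk x y) : Set V := {v | ∃ n, v ∈ (P n).support}

/-- An `x`–`y` grain line in `G`. -/
structure GrainLine {V : Type*} (G : SimpleGraph V) (x y : V) where
  ne_xy : x ≠ y
  /-- The limit set `L`. -/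
  L : Set V
  /-- The linear order `≤_L` on `L`. -/
  le : V → V → Prop
  /-- The pairwise edge-disjoint `x`–`y` paths. -/
  P : ℕ → G.Walk x y
  isPath : ∀ n, (P n).IsPath
  edgeDisj : ∀ m n, m ≠ n → EdgeDisjW (P m) (P n)
  le_refl : ∀ v ∈ L, le v v
  le_trans : ∀ u ∈ L, ∀ v ∈ L, ∀ w ∈ L, le u v → le v w → le u w
  le_antisymm : ∀ u ∈ L, ∀ v ∈ L, le u v → le v u → u = v
  le_total : ∀ u ∈ L, ∀ v ∈ L, le u v ∨ le v u
  x_mem : x ∈ L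
  y_mem : y ∈ L
  x_min : ∀ v ∈ L, le x v
  y_max : ∀ v ∈ L, le v y
  /-- (GL1): `L` is the set of vertices lying on a final segment of the paths. -/
  gl1 : ∀ v : V, v ∈ L ↔ ∃ N : ℕ, ∀ n : ℕ, v ∈ (P n).support ↔ N ≤ n
  /-- (GL2): a vertex of some path not in `L` lies on no other path. -/
  gl2 : ∀ n : ℕ, ∀ v ∈ (P n).support, v ∉ L → ∀ m : ℕ, m ≠ n → v ∉ (P m).support
  /-- (GL3): for `n ≥ 1`, the path `P n` traverses the vertices of `L_{<n}`
  in the order given by `≤_L`. -/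
  gl3 : ∀ n : ℕ, 1 ≤ n → ∀ u v : V, u ∈ L → v ∈ L →
      (∃ m < n, u ∈ (P m).support) → (∃ m < n, v ∈ (P m).support) →
      u ≠ v → (le u v ↔ Before (P n).support u v)

namespace GrainLine

variable {V : Type*} {G : SimpleGraph V} {x y : V}

/-- The graph `⋃𝒫` defined by the grain line. -/
def union (gl : GrainLine G x y) : SimpleGraph V := walkUnion gl.P

/-- The vertex set of `⋃𝒫`. -/
def supp (gl : GrainLine G x y) : Set V := walkSupp gl.P

/-- The set `L_{<n}` of vertices of `L` of depth `< n`. -/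
def Llt (gl : GrainLine G x y) (n : ℕ) : Set V :=
  {v | v ∈ gl.L ∧ ∃ m < n, v ∈ (gl.P m).support}

/-- The `𝒫`-depth of a vertex. -/
noncomputable def vDepth (gl : GrainLine G x y) (v : V) : ℕ :=
  sInf {n | v ∈ (gl.P n).support}

/-- The `𝒫`-depth of an edge. -/
noncomputable def eDepth (gl : GrainLine G x y) (e : Sym2 V) : ℕ :=
  sInf {n | e ∈ (gl.P n).edges}

/-- `u` and `v` are the ends of a `𝒫`-segment of depth `d`: both lie in
`L_{<d}` and `v` is the successor of `u` in `(L_{<d}, ≤_L)`. -/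
def IsSegEnds (gl : GrainLine G x y) (d : ℕ) (u v : V) : Prop :=
  u ∈ gl.Llt d ∧ v ∈ gl.Llt d ∧ u ≠ v ∧ gl.le u v ∧
    ∀ z ∈ gl.Llt d, gl.le u z → gl.le z v → z = u ∨ z = v

/-- The grain line is well-structured: every vertex of a `𝒫`-segment
`u P_d v` lying in `L` belongs to the interval `[u,v]` of `(L, ≤_L)`. -/
def WellStructured (gl : GrainLine G x y) : Prop :=
  ∀ d u v, gl.IsSegEnds d u v →
    ∀ w ∈ gl.L, (w = u ∨ w = v ∨ List.Sublist [u, w, v] (gl.P d).support) →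
      gl.le u w ∧ gl.le w v

/-- The grain line is free: the graph `⋃𝒫` it defines is infinitely
edge-connected. -/
def Free (gl : GrainLine G x y) : Prop := InfEdgeConnOn gl.union gl.supp

/-- The grain line is wildly presented. -/
def WildlyPresented (gl : GrainLine G x y) : Prop :=
  ∀ n : ℕ, 1 ≤ n → ∀ u v : V, u ∈ gl.Llt n → v ∈ gl.Llt n → u ≠ v → gl.le u v →
    ∃ w ∈ gl.L, w ≠ u ∧ w ≠ v ∧ gl.le u w ∧ gl.le w v ∧
      List.Sublist [u, w, v] (gl.P n).support

end GrainLine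

/-- `G` is a generalised halved Farey graph: it is defined by a grain line
satisfying (GL2') and (GL3'). -/
def IsGenHalvedFarey {V : Type*} (G : SimpleGraph V) : Prop :=
  ∃ (x y : V) (gl : GrainLine G x y),
    (∀ v : V, v ∈ gl.L) ∧
    (∀ u v : V, gl.le u v ↔ (u = v ∨ ∃ n, Before (gl.P n).support u v)) ∧
    (∀ u v : V, G.Adj u v ↔ ∃ n, s(u, v) ∈ (gl.P n).edges)
/-- `{A, B}` is a compound-separation of `G`. -/
def IsCompoundSep {V : Type*} (G : SimpleGraph V) (A B : Set V) : Prop :=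
  A ∪ B = Set.univ ∧ (A \ B).Nonempty ∧ (B \ A).Nonempty ∧ (A ∩ B).Finite ∧
    {p : V × V | G.Adj p.1 p.2 ∧ p.1 ∈ A \ B ∧ p.2 ∈ B \ A}.Finite

/-- The separation `{A, B}` separates the vertices `u` and `v`. -/
def SepPair {V : Type*} (A B : Set V) (u v : V) : Prop :=
  (u ∈ A \ B ∧ v ∈ B \ A) ∨ (u ∈ B \ A ∧ v ∈ A \ B)

/-- The compound-separation `{A, B}` separates `u` and `v` minimally. -/
def MinSeps {V : Type*} (G : SimpleGraph V) (A B : Set V) (u v : V) : Prop :=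
  SepPair A B u v ∧
    ∀ C D : Set V, IsCompoundSep G C D → C ∩ D ⊂ A ∩ B → ¬ SepPair C D u v

/-- `{A, B}` is a unitary compound-separation of `G` with separator `w`. -/
def IsUnitaryCSep {V : Type*} (G : SimpleGraph V) (A B : Set V) (w : V) : Prop :=
  IsCompoundSep G A B ∧ A ∩ B = {w}

/-- `w` is a compound-cutvertex of `G`. -/
def IsCompoundCutvertex {V : Type*} (G : SimpleGraph V) (w : V) : Prop :=
  ∃ A B, IsUnitaryCSep G A B w

/-- `G` is `k`-compound-connected: no compound-separation of order `< k`
separates any two vertices. -/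
def kCompConn {V : Type*} (G : SimpleGraph V) (k : ℕ) : Prop :=
  ∀ A B : Set V, IsCompoundSep G A B → (A ∩ B).ncard < k →
    ∀ u v : V, ¬ SepPair A B u v

/-- `u` and `v` cannot be separated by deleting finitely many edges. -/
def FinEdgeConn {V : Type*} (G : SimpleGraph V) (u v : V) : Prop :=
  ∀ F : Set (Sym2 V), F.Finite → (G.deleteEdges F).Reachable u v

/-- `G` is a Π-graph: it is infinitely edge-connected but has no two vertices
linked by infinitely many pairwise internally disjoint paths. -/
def PiGraph {V : Type*} (G : SimpleGraph V) : Prop :=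
  InfEdgeConn G ∧
    ∀ u v : V, u ≠ v →
      ¬ ∃ P : ℕ → G.Walk u v, (∀ n, (P n).IsPath) ∧
          ∀ m n, m ≠ n → ∀ w ∈ (P m).support, w ∈ (P n).support → w = u ∨ w = v

/-- `H` is a `k`-bounded minor of `G`: there are disjoint nonempty connected
branch sets of size `< k`. -/
def IsBddMinor {VH VG : Type*} (H : SimpleGraph VH) (G : SimpleGraph VG) (k : ℕ) : Prop :=
  ∃ B : VH → Set VG,
    (∀ h, (B h).Nonempty) ∧
    (∀ h, (B h).Finite ∧ (B h).ncard < k) ∧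
    (∀ h h', h ≠ h' → Disjoint (B h) (B h')) ∧
    (∀ h, (G.induce (B h)).Connected) ∧
    (∀ h h', H.Adj h h' → ∃ a ∈ B h, ∃ b ∈ B h', G.Adj a b)

/-- The order on oriented separations: `(A,B) ≤ (C,D)` iff `A ⊆ C` and `D ⊆ B`. -/
def osLE {V : Type*} (s t : Set V × Set V) : Prop := s.1 ⊆ t.1 ∧ t.2 ⊆ s.2

/-- The reverse orientation of an oriented separation. -/
def swapSep {V : Type*} (s : Set V × Set V) : Set V × Set V := (s.2, s.1)

/-- Two (unordered) separations, given by representative orientations, are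
nested: they have comparable orientations. -/
def NestedSep {V : Type*} (s t : Set V × Set V) : Prop :=
  osLE s t ∨ osLE t s ∨ osLE s (swapSep t) ∨ osLE (swapSep s) t

/-- `σ` is an orientation of the set `N` of separations which is a star. -/
def IsStarOrientation {V : Type*} (N σ : Set (Set V × Set V)) : Prop :=
  (∀ s ∈ N, s ∈ σ ∨ swapSep s ∈ σ) ∧
  (∀ s ∈ N, ¬ (s ∈ σ ∧ swapSep s ∈ σ)) ∧
  (∀ t ∈ σ, t ∈ N ∨ swapSep t ∈ N) ∧
  (∀ s ∈ σ, ∀ t ∈ σ, s ≠ t → osLE s (swapSep t))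

/-- The set `N` of unitary compound-separations is faithful to the
compound-cutvertex `w` in `G`. -/
def FaithfulToVert {V : Type*} (G : SimpleGraph V) (N : Set (Set V × Set V)) (w : V) : Prop :=
  (∃ σ, IsStarOrientation {s ∈ N | s.1 ∩ s.2 = {w}} σ) ∧
  ∀ u v : V, (∃ A B, IsUnitaryCSep G A B w ∧ SepPair A B u v) →
    ∃ s ∈ N, s.1 ∩ s.2 = {w} ∧ SepPair s.1 s.2 u v

/-- The set `N` of unitary compound-separations is faithful to `G`. -/
def FaithfulSet {V : Type*} (G : SimpleGraph V) (N : Set (Set V × Set V)) : Prop :=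
  ∀ w : V, IsCompoundCutvertex G w → FaithfulToVert G N w

/-- A set of graphs is typical for the class of infinitely edge-connected
graphs with regard to the topological minor relation. -/
def TypicalTopMinor (𝓗 : Set (Σ V : Type, SimpleGraph V)) : Prop :=
  ∀ (W : Type) (G : SimpleGraph W), InfEdgeConn G → ∃ H ∈ 𝓗, TopMinor H.2 G

/-! Let `e` be an edge of `W` of the maximal depth `M`; it lies on `P_M`, hence on a `𝒫`-segment
`u P_M v` of depth `M`, where `u`, `v` are the nearest vertices of `L_{<M}` around `e` on `P_M`
((GL3) turns nearness along `P_M` into succession in `≤_L`). An inner vertex `w` of this segment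
lies on no `P_n` with `n < M`: it is not in `L_{<M}`, and if it is not in `L` at all then (GL2)
applies. So `w` is neither end of `W` (both have depth `< M`), and every edge of `W` at `w` has
depth exactly `M`, i.e. is one of the two edges of `P_M` at `w`. Thus as soon as `W` uses one
segment edge at `w` it uses the other too, and starting from `e` the path `W` runs through the
whole segment. -/

namespace List

variable {α : Type*}

theorem Nodup.eq_of_append_cons_eq {s t s' t' : List α} {a : α} (h : (s ++ a :: t).Nodup)
    (he : s ++ a :: t = s' ++ a :: t') : s = s' ∧ t = t' := by
  have ha : a ∉ s ∧ a ∉ t := by simpa [nodup_middle] using (nodup_middle.1 h).notMem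
  have := (append_cons_inj_of_notMem ha.1 ha.2).1 he
  exact ⟨this.1, this.2.2⟩

theorem Nodup.eq_or_eq_of_infix {l : List α} {p w r c : α} (hl : l.Nodup)
    (h : [p, w, r] <:+: l) (hc : [c, w] <:+: l ∨ [w, c] <:+: l) : c = p ∨ c = r := by
  obtain ⟨s, t, rfl⟩ := h
  have hl' : ((s ++ [p]) ++ w :: r :: t).Nodup := by simpa using hl
  rcases hc with ⟨s', t', h'⟩ | ⟨s', t', h'⟩
  · have := (hl'.eq_of_append_cons_eq (s' := s' ++ [c]) (t' := t') (by simpa using h'.symm)).1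
    simp only [append_singleton_inj] at this
    exact Or.inl this.2.symm
  · have := (hl'.eq_of_append_cons_eq (s' := s') (t' := c :: t') (by simpa using h'.symm)).2
    simp only [cons.injEq] at this
    exact Or.inr this.1.symm

theorem Nodup.mem_right_of_pair_sublist {s t : List α} {a b : α} (h : (s ++ a :: t).Nodup)
    (hab : [a, b] <+ s ++ a :: t) : b ∈ t := by
  have ha : a ∉ s := fun has => by simp_all [nodup_middle]
  obtain ⟨l₁, l₂, hsplit, h₁, h₂⟩ := sublist_append_iff.1 hab
  rcases l₁ with _ | ⟨c, _ | ⟨d, l₁⟩⟩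
  · simp only [nil_append] at hsplit
    subst hsplit
    rcases sublist_cons_iff.1 h₂ with h₂ | ⟨r, hr, h₂⟩
    · exact h₂.subset (by simp)
    · simp only [cons.injEq] at hr
      exact h₂.subset (by simp [← hr.2])
  · simp only [cons_append, nil_append, cons.injEq] at hsplit
    exact absurd (h₁.subset (by simp [hsplit.1])) ha
  · simp only [cons_append, cons.injEq] at hsplit
    exact absurd (h₁.subset (by simp [hsplit.1])) ha

theorem Nodup.mem_left_of_pair_sublist {s t : List α} {a b : α} (h : (s ++ a :: t).Nodup)
    (hba : [b, a] <+ s ++ a :: t) : b ∈ s := by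
  have hr : (t.reverse ++ a :: s.reverse).Nodup := by simpa using nodup_reverse.2 h
  simpa using hr.mem_right_of_pair_sublist (b := b) (by simpa using reverse_sublist.2 hba)

theorem exists_eq_append_cons_first {A : α → Prop} {l : List α} (h : ∃ z ∈ l, A z) :
    ∃ s a t, l = s ++ a :: t ∧ A a ∧ ∀ z ∈ s, ¬ A z := by
  induction l with
  | nil => simp at h
  | cons b l ih =>
    by_cases hb : A b
    · exact ⟨[], b, l, rfl, hb, by simp⟩
    · obtain ⟨s, a, t, rfl, ha, hs⟩ := ih (by simpa [hb] using h)
      exact ⟨b :: s, a, t, rfl, ha, forall_mem_cons.2 ⟨hb, hs⟩⟩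

theorem exists_eq_append_cons_last {A : α → Prop} {l : List α} (h : ∃ z ∈ l, A z) :
    ∃ s a t, l = s ++ a :: t ∧ A a ∧ ∀ z ∈ t, ¬ A z := by
  obtain ⟨s, a, t, hl, ha, hs⟩ :=
    exists_eq_append_cons_first (l := l.reverse) (by simpa using h)
  exact ⟨t.reverse, a, s.reverse, by simpa using congrArg reverse hl, ha, by simpa using hs⟩

theorem pair_infix_append_of_getLast?_of_head? {X Y : List α} {p q : α} (hX : X.getLast? = some p)
    (hY : Y.head? = some q) : [p, q] <:+: X ++ Y := by
  obtain ⟨X', rfl⟩ := getLast?_eq_some_iff.1 hX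
  obtain ⟨Y', rfl⟩ := head?_eq_some_iff.1 hY
  exact ⟨X', Y', by simp⟩

theorem exists_segment_around_pair {A : α → Prop} {S l₁ l₂ : List α} {p q : α}
    (hS : S = l₁ ++ [p] ++ q :: l₂) (hl : ∃ z ∈ l₁ ++ [p], A z)
    (hr : ∃ z ∈ q :: l₂, A z) :
    ∃ s u m v t, S = s ++ u :: (m ++ v :: t) ∧ A u ∧ A v ∧ (∀ z ∈ m, ¬ A z) ∧
      [p, q] <:+: u :: (m ++ [v]) := by
  obtain ⟨s, u, m₁, h₁, hu, hm₁⟩ := exists_eq_append_cons_last hl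
  obtain ⟨m₂, v, t, h₂, hv, hm₂⟩ := exists_eq_append_cons_first hr
  refine ⟨s, u, m₁ ++ m₂, v, t, ?_, hu, hv, ?_, ?_⟩
  · rw [hS, h₁, h₂]; simp
  · exact fun z hz => (mem_append.1 hz).elim (hm₁ z) (hm₂ z)
  · have hX : (u :: m₁).getLast? = some p := by simpa using (congrArg getLast? h₁).symm
    have hY : (m₂ ++ [v]).head? = some q := by cases m₂ <;> simp_all
    simpa using pair_infix_append_of_getLast?_of_head? hX hY

theorem mem_of_infix_cons_append {m : List α} {p w r u v : α}
    (h : [p, w, r] <:+: u :: (m ++ [v])) : w ∈ m := by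
  obtain ⟨s, t, h⟩ := h
  have hm : m = (s ++ [p, w, r] ++ t).tail.dropLast := by rw [h]; simp
  cases s <;> simp [hm, dropLast_append_of_ne_nil]

theorem isChain_of_iff_of_exists {R : α → α → Prop} {l : List α}
    (hprop : ∀ p w r, [p, w, r] <:+: l → (R p w ↔ R w r))
    (hex : ∃ p q, [p, q] <:+: l ∧ R p q) : l.IsChain R := by
  induction l with
  | nil => simp
  | cons a l ih =>
    rcases l with _ | ⟨b, l⟩
    · simp
    have htail : ∀ p w r, [p, w, r] <:+: b :: l → (R p w ↔ R w r) :=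
      fun p w r h => hprop p w r (h.trans (suffix_cons _ _).isInfix)
    obtain ⟨p, q, hpq, hR⟩ := hex
    rw [isChain_cons_cons]
    rcases infix_cons_iff.1 hpq with hpq | hpq
    · obtain ⟨rfl, rfl⟩ : p = a ∧ q = b := by simpa using hpq
      refine ⟨hR, ?_⟩
      rcases l with _ | ⟨c, l⟩
      · simp
      exact ih htail ⟨q, c, ⟨[], l, rfl⟩, (hprop p q c ⟨[], l, rfl⟩).1 hR⟩
    · have hchain := ih htail ⟨p, q, hpq, hR⟩
      rcases l with _ | ⟨c, l⟩
      · simpa using hpq.length_le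
      exact ⟨(hprop a b c ⟨[], l, rfl⟩).2 (isChain_cons_cons.1 hchain).1, hchain⟩

theorem Nodup.cons_infix_of_adj {T l : List α} {a b c : α} (hT : T.Nodup)
    (hbc : b :: c :: l <:+: T) (hab : [a, b] <:+: T ∨ [b, a] <:+: T) (hac : a ≠ c) :
    a :: b :: c :: l <:+: T := by
  obtain ⟨s, t, rfl⟩ := hbc
  have hT' : (s ++ b :: (c :: l ++ t)).Nodup := by simpa using hT
  rcases hab with ⟨s', t', h⟩ | ⟨s', t', h⟩
  · have := (hT'.eq_of_append_cons_eq (s' := s' ++ [a]) (t' := t') (by simpa using h.symm)).1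
    exact ⟨s', t, by simp [this]⟩
  · have := (hT'.eq_of_append_cons_eq (s' := s') (t' := a :: t') (by simpa using h.symm)).2
    simp only [cons_append, cons.injEq] at this
    exact absurd this.1.symm hac

theorem Nodup.infix_or_reverse_infix_of_isChain {T : List α} (hT : T.Nodup) :
    ∀ {l : List α}, l.Nodup → 2 ≤ l.length →
      l.IsChain (fun p q => [p, q] <:+: T ∨ [q, p] <:+: T) → l <:+: T ∨ l.reverse <:+: T
  | [], _, hlen, _ | [_], _, hlen, _ => by simp at hlen
  | [a, b], _, _, hc => by simpa using hc
  | a :: b :: c :: l, hl, _, hc => by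
    rw [isChain_cons_cons] at hc
    have hac : a ≠ c := by rintro rfl; simp at hl
    rcases hT.infix_or_reverse_infix_of_isChain hl.of_cons (by simp) hc.2 with h | h
    · exact Or.inl (hT.cons_infix_of_adj h hc.1 hac)
    · have h' : b :: c :: l <:+: T.reverse := by simpa using reverse_infix.2 h
      have hab : [a, b] <:+: T.reverse ∨ [b, a] <:+: T.reverse := by
        simpa [← reverse_infix (l₂ := T), or_comm] using hc.1
      right
      simpa using reverse_infix.2 ((nodup_reverse.2 hT).cons_infix_of_adj h' hab hac)

end List

namespace SimpleGraph.Walk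

variable {V : Type*} {G : SimpleGraph V} {u v : V}

theorem support_head? (p : G.Walk u v) : p.support.head? = some u := by
  rw [← p.cons_tail_support]; rfl

theorem support_getLast? (p : G.Walk u v) : p.support.getLast? = some v := by
  rw [List.getLast?_eq_some_getLast p.support_ne_nil, p.getLast_support]

theorem exists_infix_support_of_ne {p : G.Walk u v} {w : V} (hw : w ∈ p.support)
    (hu : w ≠ u) (hv : w ≠ v) : ∃ a b, [a, w, b] <:+: p.support := by
  obtain ⟨s, t, hst⟩ := List.append_of_mem hw
  rcases s.eq_nil_or_concat with rfl | ⟨s, a, rfl⟩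
  · exact absurd (by simpa [hst] using p.support_head?) hu
  rcases t with _ | ⟨b, t⟩
  · exact absurd (by simpa [hst] using p.support_getLast?) hv
  exact ⟨a, b, s, t, by simp [hst]⟩

theorem exists_infix_support_of_mem_edges {p : G.Walk u v} {e : Sym2 V} (he : e ∈ p.edges) :
    ∃ a b, [a, b] <:+: p.support ∧ s(a, b) = e := by
  induction e using Sym2.ind with
  | _ a b =>
    rcases infix_support_iff_mem_edges.2 he with h | h
    · exact ⟨a, b, h, rfl⟩
    · exact ⟨b, a, h, Sym2.eq_swap⟩

theorem IsPath.eq_or_eq_of_mem_edges {p : G.Walk u v} (hp : p.IsPath) {a w b c : V}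
    (h : [a, w, b] <:+: p.support) (hc : s(c, w) ∈ p.edges) : c = a ∨ c = b :=
  hp.support_nodup.eq_or_eq_of_infix h (infix_support_iff_mem_edges.2 hc)

end SimpleGraph.Walk

theorem IsPortion.infix {V : Type*} {R l : List V} {u v : V} (h : IsPortion R u v l) :
    l <:+: R :=
  let ⟨⟨pre, post, h⟩, _⟩ := h
  ⟨pre, post, h.symm⟩

namespace GrainLine

variable {V : Type*} {G : SimpleGraph V} {x y : V} (gl : GrainLine G x y)

theorem exists_mem_edges_of_mem_edges {a b : V} {W : gl.union.Walk a b} {e : Sym2 V}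
    (he : e ∈ W.edges) : ∃ n, e ∈ (gl.P n).edges := by
  induction e using Sym2.ind with
  | _ c d => exact W.adj_of_mem_edges he

theorem mem_edges_eDepth {e : Sym2 V} (h : ∃ n, e ∈ (gl.P n).edges) :
    e ∈ (gl.P (gl.eDepth e)).edges :=
  Nat.sInf_mem h

theorem mem_support_vDepth {w : V} (h : ∃ n, w ∈ (gl.P n).support) :
    w ∈ (gl.P (gl.vDepth w)).support :=
  Nat.sInf_mem h

theorem le_of_mem_support_of_notMem_Llt {d n : ℕ} {w : V} (hw : w ∈ (gl.P d).support)
    (hwL : w ∉ gl.Llt d) (hn : w ∈ (gl.P n).support) : d ≤ n := by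
  by_contra! hnd
  by_cases hL : w ∈ gl.L
  · exact hwL ⟨hL, n, hnd, hn⟩
  · exact gl.gl2 d w hw hL n hnd.ne hn

theorem mem_edges_of_notMem_Llt {d : ℕ} {w : V} {e : Sym2 V} (hw : w ∈ (gl.P d).support)
    (hwL : w ∉ gl.Llt d) (he : ∃ n, e ∈ (gl.P n).edges) (hwe : w ∈ e)
    (hed : gl.eDepth e ≤ d) : e ∈ (gl.P d).edges := by
  have hmem := gl.mem_edges_eDepth he
  have hde : d ≤ gl.eDepth e := gl.le_of_mem_support_of_notMem_Llt hw hwL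
    (Walk.mem_support_iff_exists_mem_edges.2 (Or.inr ⟨e, hmem, hwe⟩))
  rwa [Nat.le_antisymm hed hde] at hmem

theorem mem_edges_iff_of_infix {a b : V} {W : gl.union.Walk a b} (hW : W.IsPath) {d : ℕ}
    (hub : ∀ e ∈ W.edges, gl.eDepth e ≤ d) (ha : gl.vDepth a < d) (hb : gl.vDepth b < d)
    {p w r : V} (hpwr : [p, w, r] <:+: (gl.P d).support) (hwL : w ∉ gl.Llt d) :
    s(p, w) ∈ W.edges ↔ s(w, r) ∈ W.edges := by
  have hw : w ∈ (gl.P d).support := hpwr.subset (by simp)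
  suffices hboth : w ∈ W.support → s(p, w) ∈ W.edges ∧ s(w, r) ∈ W.edges from
    ⟨fun h => (hboth (W.snd_mem_support_of_mem_edges h)).2,
      fun h => (hboth (W.fst_mem_support_of_mem_edges h)).1⟩
  intro hwW
  have hne : ∀ c, gl.vDepth c < d → w ≠ c := by
    rintro c hc rfl
    exact hc.not_ge (gl.le_of_mem_support_of_notMem_Llt hw hwL (gl.mem_support_vDepth ⟨d, hw⟩))
  obtain ⟨p', r', h'⟩ := W.exists_infix_support_of_ne hwW (hne a ha) (hne b hb)
  have hp'r' : p' ≠ r' := by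
    rintro rfl
    simpa using h'.nodup hW.support_nodup
  have hnbr : ∀ c, s(c, w) ∈ W.edges → c = p ∨ c = r := fun c hc =>
    (gl.isPath d).eq_or_eq_of_mem_edges hpwr <| gl.mem_edges_of_notMem_Llt hw hwL
      (gl.exists_mem_edges_of_mem_edges hc) (Sym2.mem_mk_right _ _) (hub _ hc)
  have hp' : s(p', w) ∈ W.edges :=
    Walk.infix_support_iff_mem_edges.1 (Or.inl (List.IsInfix.trans ⟨[], [r'], rfl⟩ h'))
  have hr' : s(r', w) ∈ W.edges :=
    Walk.infix_support_iff_mem_edges.1 (Or.inr (List.IsInfix.trans ⟨[p'], [], rfl⟩ h'))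
  rcases hnbr p' hp' with rfl | rfl <;> rcases hnbr r' hr' with rfl | rfl
  · exact absurd rfl hp'r'
  · exact ⟨hp', Sym2.eq_swap ▸ hr'⟩
  · exact ⟨hr', Sym2.eq_swap ▸ hp'⟩
  · exact absurd rfl hp'r'

theorem isSegEnds_of_support_eq {d : ℕ} (hd : 1 ≤ d) {s m t : List V} {u v : V}
    (hS : (gl.P d).support = s ++ u :: (m ++ v :: t)) (hu : u ∈ gl.Llt d) (hv : v ∈ gl.Llt d)
    (hm : ∀ z ∈ m, z ∉ gl.Llt d) : gl.IsSegEnds d u v := by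
  have hN : (s ++ u :: (m ++ v :: t)).Nodup := hS ▸ (gl.isPath d).support_nodup
  have hN' : ((s ++ u :: m) ++ v :: t).Nodup := by simpa using hN
  have huv : u ≠ v := fun h =>
    (List.nodup_cons.1 (hN.sublist (List.sublist_append_right _ _))).1 (h ▸ by simp)
  have hbefore : Before (gl.P d).support u v := by
    rw [hS]
    exact List.sublist_append_of_sublist_right
      (List.cons_sublist_cons.2 (List.singleton_sublist.2 (by simp)))
  refine ⟨hu, hv, huv, (gl.gl3 d hd u v hu.1 hv.1 hu.2 hv.2 huv).2 hbefore, ?_⟩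
  intro z hz huz hzv
  by_contra! hne
  have hafter : z ∈ m ++ v :: t := hN.mem_right_of_pair_sublist <| hS ▸
    (gl.gl3 d hd u z hu.1 hz.1 hu.2 hz.2 hne.1.symm).1 huz
  have hbefore : z ∈ s ++ u :: m := hN'.mem_left_of_pair_sublist <| by
    simpa [hS, Before] using (gl.gl3 d hd z v hz.1 hv.1 hz.2 hv.2 hne.2).1 hzv
  refine hm z ?_ hz
  simp only [List.mem_append, List.mem_cons] at hafter hbefore
  grind

theorem exists_isSegEnds_of_infix {d : ℕ} (hd : 1 ≤ d) {p q : V}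
    (hpq : [p, q] <:+: (gl.P d).support) :
    ∃ u m v, gl.IsSegEnds d u v ∧ IsPortion (gl.P d).support u v (u :: (m ++ [v])) ∧
      [p, q] <:+: u :: (m ++ [v]) ∧ ∀ z ∈ m, z ∉ gl.Llt d := by
  obtain ⟨l₁, l₂, hS⟩ := hpq
  replace hS : (gl.P d).support = (l₁ ++ [p]) ++ q :: l₂ := by simp [← hS]
  have hx : x ∈ l₁ ++ [p] := by
    have h := (gl.P d).support_head?
    rw [hS, List.head?_append_of_ne_nil _ (by simp)] at h
    exact List.mem_of_mem_head? h
  have hy : y ∈ q :: l₂ := by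
    have h := (gl.P d).support_getLast?
    rw [hS, List.getLast?_append_of_ne_nil _ (by simp)] at h
    exact List.mem_of_mem_getLast? h
  obtain ⟨s, u, m, v, t, hS', hu, hv, hm, hpq'⟩ :=
    List.exists_segment_around_pair (A := (· ∈ gl.Llt d)) hS
      ⟨x, hx, gl.x_mem, 0, hd, (gl.P 0).start_mem_support⟩
      ⟨y, hy, gl.y_mem, 0, hd, (gl.P 0).end_mem_support⟩
  have hport : IsPortion (gl.P d).support u v (u :: (m ++ [v])) :=
    ⟨⟨s, t, by simp [hS']⟩, rfl, by rw [← List.cons_append, List.getLast?_concat]⟩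
  exact ⟨u, m, v, gl.isSegEnds_of_support_eq hd hS' hu hv hm, hport, hpq', hm⟩

theorem infix_or_reverse_infix_of_segment {a b : V} {W : gl.union.Walk a b} (hW : W.IsPath)
    {d : ℕ} (hub : ∀ e ∈ W.edges, gl.eDepth e ≤ d) (ha : gl.vDepth a < d)
    (hb : gl.vDepth b < d) {u v : V} {m : List V} (hl : u :: (m ++ [v]) <:+: (gl.P d).support)
    (hm : ∀ z ∈ m, z ∉ gl.Llt d) {p q : V} (hpq : [p, q] <:+: u :: (m ++ [v]))
    (he : s(p, q) ∈ W.edges) :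
    u :: (m ++ [v]) <:+: W.support ∨ (u :: (m ++ [v])).reverse <:+: W.support := by
  have hchain : (u :: (m ++ [v])).IsChain (fun p q => s(p, q) ∈ W.edges) :=
    List.isChain_of_iff_of_exists (fun _ w _ h => gl.mem_edges_iff_of_infix hW hub ha hb
      (h.trans hl) (hm w (List.mem_of_infix_cons_append h))) ⟨p, q, hpq, he⟩
  refine hW.support_nodup.infix_or_reverse_infix_of_isChain
    ((gl.isPath d).support_nodup.sublist hl.sublist) (by simp) ?_
  exact hchain.imp fun _ _ => Walk.infix_support_iff_mem_edges.2

end GrainLine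

/-- a path in `⋃𝒫` containing an edge deeper than both of its
endvertices contains a `𝒫`-segment in depth equal to the maximal depth `M` of
its edges. -/
theorem grainline_first_dive {V : Type*} {G : SimpleGraph V} {x y : V}
    (gl : GrainLine G x y) {a b : V} (W : gl.union.Walk a b) (hW : W.IsPath)
    (M : ℕ) (hub : ∀ e ∈ W.edges, gl.eDepth e ≤ M)
    (hmax : ∃ e ∈ W.edges, gl.eDepth e = M)
    (hdeep : ∃ e ∈ W.edges, gl.vDepth a < gl.eDepth e ∧ gl.vDepth b < gl.eDepth e) :
    ∃ u v l, gl.IsSegEnds M u v ∧ IsPortion (gl.P M).support u v l ∧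
      (l <:+: W.support ∨ l.reverse <:+: W.support) := by
  obtain ⟨e₀, he₀, ha, hb⟩ := hdeep
  replace ha : gl.vDepth a < M := ha.trans_le (hub e₀ he₀)
  replace hb : gl.vDepth b < M := hb.trans_le (hub e₀ he₀)
  obtain ⟨e, heW, heM⟩ := hmax
  have heP : e ∈ (gl.P M).edges :=
    heM ▸ gl.mem_edges_eDepth (gl.exists_mem_edges_of_mem_edges heW)
  obtain ⟨p, q, hpq, rfl⟩ := Walk.exists_infix_support_of_mem_edges heP
  obtain ⟨u, m, v, hseg, hport, hpq', hm⟩ := gl.exists_isSegEnds_of_infix (by omega) hpq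
  exact ⟨u, v, _, hseg, hport,
    gl.infix_or_reverse_infix_of_segment hW hub ha hb hport.infix hm hpq' heW⟩
end

section
/- Let G be an infinitely edge-connected graph and X a finite set of vertices of G. Then exactly one of the following holds: (1) there is a strong immersion of K^{ℵ₀} in G with at most one branch vertex in every edge-block of G−X; (2) G−X has only finitely many edge-blocks. -/
open SimpleGraph

/-! If `G − X` has infinitely many edge-blocks, pick vertices `u₀, u₁, …` of `G − X` in distinct
edge-blocks. As `G` is infinitely edge-connected while `uₙ` and `u₀` are separated in `G − X` by
finitely many edges, infinitely many edge-disjoint `uₙ`–`u₀` paths of `G` meet the finite set `X`;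
cutting them at their first vertex in `X` and applying the pigeonhole principle twice yields one
`x ∈ X` and infinitely many `uₙ`, each with infinitely many edge-disjoint `uₙ`–`x` paths (spokes)
meeting `X` only in `x`. Only finitely many spokes at `uₙ` pass through `uₘ` for `m ≠ n`, since
otherwise `uₙ` and `uₘ` would lie in the same edge-block. A greedy construction now chooses the
branch vertices among the `uₙ` and, for every ordered pair `(i, j)`, a spoke at the `i`-th branch
vertex, each choice avoiding the finitely many edges and vertices used before; the spokes of
`(i, j)` and `(j, i)` joined at `x` give the immersion of `K^ℵ₀`.

Conversely, the branch vertices of such an immersion outside the finite set `X` lie in pairwise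
distinct edge-blocks of `G − X`, so there are infinitely many of them. -/

open Function

section

variable {V : Type*} {G : SimpleGraph V}

lemma EdgeDisjW.symm {a b c d : V} {p : G.Walk a b} {q : G.Walk c d} (h : EdgeDisjW p q) :
    EdgeDisjW q p :=
  fun e hq hp => h e hp hq

namespace FinEdgeConn

variable {W : Type*} {H : SimpleGraph W} {u v w : W}

lemma refl (u : W) : FinEdgeConn H u u := fun _ _ => Reachable.refl u

lemma symm (h : FinEdgeConn H u v) : FinEdgeConn H v u := fun F hF => (h F hF).symm

lemma trans (h : FinEdgeConn H u v) (h' : FinEdgeConn H v w) : FinEdgeConn H u w :=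
  fun F hF => (h F hF).trans (h' F hF)

lemma setOf_eq (h : FinEdgeConn H u v) :
    {w | FinEdgeConn H w u} = {w | FinEdgeConn H w v} :=
  Set.ext fun _ => ⟨fun hw => hw.trans h, fun hw => hw.trans h.symm⟩

end FinEdgeConn

lemma finite_setOf_exists_mem_edges {ι : Type*} {u v : V} (P : ι → G.Walk u v)
    (hP : Pairwise fun i j => EdgeDisjW (P i) (P j)) {E : Set (Sym2 V)} (hE : E.Finite) :
    {i | ∃ e ∈ E, e ∈ (P i).edges}.Finite := by
  refine (hE.biUnion fun e _ => Set.Subsingleton.finite (s := {i | e ∈ (P i).edges})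
    fun i hi j hj => by_contra fun hij => hP hij e hi hj).subset ?_
  rintro i ⟨e, he, hi⟩
  exact Set.mem_biUnion he hi

lemma finEdgeConn_of_pairwise_edgeDisjW {ι : Type*} [Infinite ι] {u v : V}
    (P : ι → G.Walk u v) (hP : Pairwise fun i j => EdgeDisjW (P i) (P j)) :
    FinEdgeConn G u v := by
  intro F hF
  obtain ⟨i, hi⟩ := (finite_setOf_exists_mem_edges P hP hF).exists_notMem
  exact ((P i).toDeleteEdges F fun e he heF => hi ⟨e, heF, he⟩).reachable

lemma finEdgeConn_induce_of_pairwise_edgeDisjW {ι : Type*} [Infinite ι] {s : Set V} {u v : V}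
    (hu : u ∈ s) (hv : v ∈ s) (P : ι → G.Walk u v)
    (hP : Pairwise fun i j => EdgeDisjW (P i) (P j)) (hs : ∀ i, ∀ w ∈ (P i).support, w ∈ s) :
    FinEdgeConn (G.induce s) ⟨u, hu⟩ ⟨v, hv⟩ := by
  have hedges : ∀ i e, e ∈ ((P i).induce s (hs i)).edges → Sym2.map Subtype.val e ∈ (P i).edges :=
    fun i e he => by
      have := List.mem_map_of_mem (f := Sym2.map (Embedding.induce (G := G) s).toHom) he
      rwa [← Walk.edges_map, (P i).map_induce] at this
  exact finEdgeConn_of_pairwise_edgeDisjW (fun i => (P i).induce s (hs i))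
    fun i j hij e hi hj => hP hij _ (hedges i e hi) (hedges j e hj)

lemma SimpleGraph.Walk.exists_prefix_first_mem {T : Set V} :
    ∀ {u v : V} (p : G.Walk u v), (∃ w ∈ p.support, w ∈ T) →
      ∃ x ∈ T, ∃ q : G.Walk u x, q.edges ⊆ p.edges ∧ ∀ w ∈ q.support, w ∈ T → w = x
  | _, _, .nil, ⟨w, hw, hwT⟩ => by
    rw [Walk.support_nil, List.mem_singleton] at hw
    subst hw
    exact ⟨w, hwT, .nil, by simp, by simp⟩
  | u, _, .cons hadj p, hmeet => by
    by_cases hu : u ∈ T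
    · exact ⟨u, hu, .nil, by simp, by simp⟩
    obtain ⟨x, hx, q, hqp, hqT⟩ := p.exists_prefix_first_mem (by
      obtain ⟨w, hw, hwT⟩ := hmeet
      rw [Walk.support_cons, List.mem_cons] at hw
      exact ⟨w, hw.resolve_left fun h => hu (h ▸ hwT), hwT⟩)
    refine ⟨x, hx, .cons hadj q, List.cons_subset_cons _ hqp, fun w hw hwT => ?_⟩
    rw [Walk.support_cons, List.mem_cons] at hw
    exact hw.elim (fun h => absurd (h ▸ hwT) hu) (hqT w · hwT)

lemma exists_injective_forall_of_finite {β : Type*} {T : Set β} (hT : T.Finite)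
    {R : ℕ → β → Prop} (h : ∀ n, ∃ y ∈ T, R n y) :
    ∃ y ∈ T, ∃ φ : ℕ → ℕ, Injective φ ∧ ∀ k, R (φ k) y := by
  choose f hfT hfR using h
  have := hT.to_subtype
  obtain ⟨⟨y, hy⟩, hfiber⟩ := Finite.exists_infinite_fiber fun n => (⟨f n, hfT n⟩ : T)
  let e := (Set.infinite_coe_iff.1 hfiber).natEmbedding
  refine ⟨y, hy, fun k => e k, Subtype.coe_injective.comp e.injective, fun k => ?_⟩
  have hk : f (e k) = y := congrArg Subtype.val (e k).2
  have := hfR (e k)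
  rwa [hk] at this

def IsEdgeFan (X : Set V) {u x : V} (Q : ℕ → G.Walk u x) : Prop :=
  (∀ a, (Q a).IsPath) ∧ (Pairwise fun a b => EdgeDisjW (Q a) (Q b)) ∧
    ∀ a, ∀ w ∈ (Q a).support, w ∈ X → w = x

section Fans

variable {X : Set V}

lemma exists_isEdgeFan (hX : X.Finite) (hG : InfEdgeConn G) {u z : ↥Xᶜ}
    (h : ¬FinEdgeConn (G.induce Xᶜ) u z) :
    ∃ x ∈ X, ∃ Q : ℕ → G.Walk u x, IsEdgeFan X Q := by
  classical
  have hne : (u : V) ≠ z := fun huz => h (Subtype.ext huz ▸ .refl u)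
  obtain ⟨P, -, hdisj⟩ := hG.2 u z hne
  let M := {n | ∃ w ∈ (P n).support, w ∈ X}
  have hM : M.Infinite := fun hfin => by
    have := hfin.infinite_compl.to_subtype
    exact h (finEdgeConn_induce_of_pairwise_edgeDisjW u.2 z.2 (fun n : ↥Mᶜ => P n)
      (fun m n hmn => hdisj m n (Subtype.coe_injective.ne hmn))
      fun n w hw hwX => n.2 ⟨w, hw, hwX⟩)
  let e := hM.natEmbedding
  have hprefix : ∀ k, ∃ x ∈ X, ∃ q : G.Walk u x, q.IsPath ∧ q.edges ⊆ (P (e k)).edges ∧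
      ∀ w ∈ q.support, w ∈ X → w = x := fun k => by
    obtain ⟨x, hx, q, hqp, hqX⟩ := (P (e k)).exists_prefix_first_mem (e k).2
    exact ⟨x, hx, q.bypass, q.bypass_isPath, fun f hf => hqp (q.edges_bypass_subset_edges hf),
      fun w hw => hqX w (q.support_bypass_subset_support hw)⟩
  obtain ⟨x, hx, φ, hφ, hQ⟩ := exists_injective_forall_of_finite hX hprefix
  choose Q hQpath hQedges hQX using hQ
  refine ⟨x, hx, Q, hQpath, fun a b hab f ha hb => ?_, hQX⟩
  exact hdisj _ _ (Subtype.coe_injective.ne (e.injective.ne (hφ.ne hab))) f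
    (hQedges a ha) (hQedges b hb)

lemma IsEdgeFan.finite_setOf_mem_support {u u' : ↥Xᶜ} {x : V} {Q : ℕ → G.Walk u x}
    (hQ : IsEdgeFan X Q) (hx : x ∈ X) (h : ¬FinEdgeConn (G.induce Xᶜ) u u') :
    {a | (u' : V) ∈ (Q a).support}.Finite := by
  classical
  by_contra hinf
  have := Set.infinite_coe_iff.2 hinf
  obtain ⟨hpath, hdisj, hX⟩ := hQ
  have hxu' : x ≠ u' := fun hxu => u'.2 (hxu ▸ hx)
  refine h (finEdgeConn_induce_of_pairwise_edgeDisjW u.2 u'.2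
    (fun a : {a | (u' : V) ∈ (Q a).support} => (Q a).takeUntil u' a.2) ?_ ?_)
  · exact fun a b hab e ha hb => hdisj (Subtype.coe_injective.ne hab) e
      (Walk.edges_takeUntil_subset_edges _ _ ha) (Walk.edges_takeUntil_subset_edges _ _ hb)
  · intro a w hw hwX
    have hwx := hX a w (Walk.support_takeUntil_subset_support _ _ hw) hwX
    exact Walk.endpoint_notMem_support_takeUntil (hpath a) a.2 hxu' (hwx ▸ hw)

lemma exists_pairwise_not_finEdgeConn {W : Type*} {H : SimpleGraph W}
    (hinf : {C : Set W | ∃ v, C = {u | FinEdgeConn H u v}}.Infinite) :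
    ∃ r : ℕ → W, Pairwise fun m n => ¬FinEdgeConn H (r m) (r n) := by
  let e := hinf.natEmbedding
  choose r hr using fun n => (e n).2
  refine ⟨r, fun m n hmn hfec => hmn (e.injective (Subtype.ext ?_))⟩
  rw [hr m, hr n, hfec.setOf_eq]

theorem exists_isEdgeFan_pool (hX : X.Finite) (hG : InfEdgeConn G)
    (hinf : {C : Set ↥Xᶜ | ∃ v, C = {u | FinEdgeConn (G.induce Xᶜ) u v}}.Infinite) :
    ∃ (w : ℕ → ↥Xᶜ) (x : V), x ∈ X ∧
      (Pairwise fun m n => ¬FinEdgeConn (G.induce Xᶜ) (w m) (w n)) ∧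
      ∀ n, ∃ Q : ℕ → G.Walk (w n) x, IsEdgeFan X Q := by
  obtain ⟨r, hr⟩ := exists_pairwise_not_finEdgeConn hinf
  obtain ⟨x, hx, φ, hφ, hfan⟩ := exists_injective_forall_of_finite hX fun n =>
    exists_isEdgeFan hX hG (hr (Nat.succ_ne_zero n))
  exact ⟨fun k => r (φ k + 1), x, hx, fun m n hmn => hr (by simpa using hφ.ne hmn), hfan⟩

theorem infinite_edgeBlocks_of_injective (hX : X.Finite) {α : ℕ → V} (hα : Injective α)
    (h : ∀ i j : ℕ, i ≠ j → ∀ (hi : α i ∈ Xᶜ) (hj : α j ∈ Xᶜ),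
      ¬FinEdgeConn (G.induce Xᶜ) ⟨α i, hi⟩ ⟨α j, hj⟩) :
    {C : Set ↥Xᶜ | ∃ v, C = {u | FinEdgeConn (G.induce Xᶜ) u v}}.Infinite := by
  have := (hX.preimage hα.injOn).infinite_compl.to_subtype
  let block (i : ↥(α ⁻¹' X)ᶜ) : Set ↥Xᶜ := {u | FinEdgeConn (G.induce Xᶜ) u ⟨α i, i.2⟩}
  refine (Set.infinite_range_of_injective (f := block) fun i j hij => ?_).mono ?_
  · by_contra hne
    have hi : (⟨α i, i.2⟩ : ↥Xᶜ) ∈ block j := hij ▸ FinEdgeConn.refl _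
    exact h i j (Subtype.coe_injective.ne hne) i.2 j.2 hi
  · rintro _ ⟨i, rfl⟩
    exact ⟨_, rfl⟩

end Fans

theorem exists_seq_forall_of_exists_update {α : Type*} [Nonempty α] (C : (ℕ → α) → ℕ → Prop)
    (hC : ∀ f g t, (∀ s ≤ t, f s = g s) → C f t → C g t)
    (step : ∀ f t, (∀ s < t, C f s) → ∃ a, C (update f t a) t) :
    ∃ f, ∀ t, C f t := by
  choose! next hnext using step
  let g : ℕ → ℕ → α := fun t =>
    Nat.rec (fun _ => Classical.arbitrary α) (fun t g => update g t (next g t)) t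
  have hg_succ (t s : ℕ) (hst : s ≠ t) : g (t + 1) s = g t s := update_of_ne hst _ _
  have hg_stable (t s : ℕ) (hst : s < t) : g t s = g (s + 1) s := by
    induction t with
    | zero => omega
    | succ t ih =>
      rcases Nat.lt_succ_iff_lt_or_eq.1 hst with hst | rfl
      · rw [hg_succ t s hst.ne, ih hst]
      · rfl
  have hg_good (t : ℕ) : ∀ s < t, C (g t) s := by
    induction t with
    | zero => omega
    | succ t ih =>
      intro s hst
      rcases Nat.lt_succ_iff_lt_or_eq.1 hst with hst | rfl
      · exact hC _ _ s (fun r hr => (hg_succ t r (by omega)).symm) (ih s hst)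
      · exact hnext (g s) s ih
  exact ⟨fun s => g (s + 1) s, fun t =>
    hC _ _ t (fun s hs => hg_stable (t + 1) s (by omega)) (hg_good (t + 1) t t.lt_succ_self)⟩

section Spokes

def spokeStage (i j : ℕ) : ℕ := 2 * Nat.pair i j + 1

lemma two_mul_lt_spokeStage (i j : ℕ) : 2 * i < spokeStage i j := by
  have := Nat.left_le_pair i j
  unfold spokeStage
  omega

lemma spokeStage_ne_two_mul (i j k : ℕ) : spokeStage i j ≠ 2 * k := by
  unfold spokeStage
  omega

lemma spokeStage_inj {i j i' j' : ℕ} (h : spokeStage i j = spokeStage i' j') :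
    i = i' ∧ j = j' :=
  Nat.pair_eq_pair.1 (by unfold spokeStage at h; omega)

lemma finite_setOf_spokeStage_lt (t : ℕ) : {p : ℕ × ℕ | spokeStage p.1 p.2 < t}.Finite := by
  refine ((Set.finite_Iio t).image Nat.unpair).subset fun p hp => ⟨Nat.pair p.1 p.2, ?_, ?_⟩
  · simp only [Set.mem_ofPred_eq, spokeStage] at hp
    simp only [Set.mem_Iio]
    omega
  · exact Nat.unpair_pair _ _

variable {x : V} (vv : ℕ → V) (Q : ∀ n, ℕ → G.Walk (vv n) x)

/-- In a choice sequence `h`, the even stage `2 * k` chooses the `k`-th branch vertex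
`vv (h (2 * k))` and the odd stage `spokeStage i j` chooses which walk of the fan at the `i`-th
branch vertex is its spoke towards the `j`-th one. -/
def spoke (h : ℕ → ℕ) (i j : ℕ) : G.Walk (vv (h (2 * i))) x :=
  Q (h (2 * i)) (h (spokeStage i j))

def VertexGood (h : ℕ → ℕ) (k : ℕ) : Prop :=
  (∀ k' < k, h (2 * k') ≠ h (2 * k)) ∧
    ∀ i j, spokeStage i j < 2 * k → vv (h (2 * k)) ∉ (spoke vv Q h i j).support

def SpokeGood (h : ℕ → ℕ) (i j : ℕ) : Prop :=
  (∀ i' j', spokeStage i' j' < spokeStage i j →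
      EdgeDisjW (spoke vv Q h i j) (spoke vv Q h i' j')) ∧
    ∀ k, 2 * k < spokeStage i j → k ≠ i → vv (h (2 * k)) ∉ (spoke vv Q h i j).support

def StageGood (h : ℕ → ℕ) (t : ℕ) : Prop :=
  (∀ k, 2 * k = t → VertexGood vv Q h k) ∧ ∀ i j, spokeStage i j = t → SpokeGood vv Q h i j

variable {vv Q}

lemma spoke_congr {f g : ℕ → ℕ} {i j : ℕ} (hfg : ∀ s ≤ spokeStage i j, f s = g s) :
    (spoke vv Q f i j).edges = (spoke vv Q g i j).edges ∧
      (spoke vv Q f i j).support = (spoke vv Q g i j).support := by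
  unfold spoke
  rw [hfg _ (two_mul_lt_spokeStage i j).le, hfg _ le_rfl]
  exact ⟨rfl, rfl⟩

lemma StageGood.congr {f g : ℕ → ℕ} {t : ℕ} (hfg : ∀ s ≤ t, f s = g s)
    (h : StageGood vv Q f t) : StageGood vv Q g t := by
  obtain ⟨hvertex, hspoke⟩ := h
  refine ⟨fun k hk => ?_, fun i j hij => ?_⟩
  · obtain ⟨hinj, havoid⟩ := hvertex k hk
    refine ⟨fun k' hk' => ?_, fun i j hij => ?_⟩
    · rw [← hfg (2 * k') (by omega), ← hfg (2 * k) hk.le]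
      exact hinj k' hk'
    · rw [← hfg (2 * k) hk.le, ← (spoke_congr fun s hs => hfg s (by omega)).2]
      exact havoid i j hij
  · obtain ⟨hdisj, havoid⟩ := hspoke i j hij
    have hij' := spoke_congr (vv := vv) (Q := Q) fun s hs => hfg s (hij ▸ hs)
    refine ⟨fun i' j' hlt e he he' => ?_, fun k hk hki => ?_⟩
    · rw [← hij'.1] at he
      rw [← (spoke_congr fun s hs => hfg s (by omega)).1] at he'
      exact hdisj i' j' hlt e he he'
    · rw [← hfg (2 * k) (by omega), ← hij'.2]
      exact havoid k hk hki

lemma exists_vertexGood_update (hvv : Injective vv) (h : ℕ → ℕ) (k : ℕ) :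
    ∃ n, VertexGood vv Q (update h (2 * k) n) k := by
  have hbad : ((fun k' => h (2 * k')) '' Set.Iio k ∪
      vv ⁻¹' ⋃ p ∈ {p : ℕ × ℕ | spokeStage p.1 p.2 < 2 * k},
        {w | w ∈ (spoke vv Q h p.1 p.2).support}).Finite :=
    ((Set.finite_Iio k).image _).union
      (((finite_setOf_spokeStage_lt _).biUnion fun _ _ => List.finite_toSet _).preimage
        hvv.injOn)
  obtain ⟨n, hn⟩ := hbad.exists_notMem
  refine ⟨n, fun k' hk' => ?_, fun i j hij => ?_⟩
  · rw [update_of_ne (by omega), update_self]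
    exact fun hk'n => hn (Or.inl ⟨k', hk', hk'n⟩)
  · rw [update_self, (spoke_congr fun s hs => update_of_ne (by omega) _ _).2]
    exact fun hmem => hn (Or.inr (Set.mem_biUnion (x := (i, j)) hij hmem))

lemma exists_spokeGood_update (hQ : ∀ n, Pairwise fun a b => EdgeDisjW (Q n a) (Q n b))
    (hhit : ∀ n m, n ≠ m → {a | vv m ∈ (Q n a).support}.Finite) (h : ℕ → ℕ) (i j : ℕ)
    (hinj : ∀ k, 2 * k < spokeStage i j → k ≠ i → h (2 * k) ≠ h (2 * i)) :
    ∃ a, SpokeGood vv Q (update h (spokeStage i j) a) i j := by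
  have hbad : ({a | ∃ e ∈ ⋃ p ∈ {p : ℕ × ℕ | spokeStage p.1 p.2 < spokeStage i j},
        {e | e ∈ (spoke vv Q h p.1 p.2).edges}, e ∈ (Q (h (2 * i)) a).edges} ∪
      ⋃ k ∈ {k | 2 * k < spokeStage i j ∧ k ≠ i},
        {a | vv (h (2 * k)) ∈ (Q (h (2 * i)) a).support}).Finite := by
    refine (finite_setOf_exists_mem_edges _ (hQ _)
      ((finite_setOf_spokeStage_lt _).biUnion fun _ _ => List.finite_toSet _)).union
      (((Set.finite_Iio (spokeStage i j)).subset fun k hk => ?_).biUnion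
        fun k hk => hhit _ _ (hinj k hk.1 hk.2).symm)
    simp only [Set.mem_ofPred_eq, Set.mem_Iio] at hk ⊢
    omega
  obtain ⟨a, ha⟩ := hbad.exists_notMem
  have hnew : (spoke vv Q (update h (spokeStage i j) a) i j).edges = (Q (h (2 * i)) a).edges ∧
      (spoke vv Q (update h (spokeStage i j) a) i j).support = (Q (h (2 * i)) a).support := by
    unfold spoke
    rw [update_self, update_of_ne (two_mul_lt_spokeStage i j).ne]
    exact ⟨rfl, rfl⟩
  refine ⟨a, fun i' j' hlt e he he' => ?_, fun k hk hki hmem => ?_⟩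
  · rw [hnew.1] at he
    rw [(spoke_congr fun s hs => update_of_ne (by omega) _ _).1] at he'
    exact ha (Or.inl ⟨e, Set.mem_biUnion (x := (i', j')) hlt he', he⟩)
  · rw [hnew.2, update_of_ne (show 2 * k ≠ spokeStage i j by omega)] at hmem
    exact ha (Or.inr (Set.mem_biUnion ⟨hk, hki⟩ hmem))

lemma VertexGood.ne {h : ℕ → ℕ} {k k' : ℕ} (hk : VertexGood vv Q h k)
    (hk' : VertexGood vv Q h k') (hne : k ≠ k') : h (2 * k) ≠ h (2 * k') := by
  rcases hne.lt_or_gt with hlt | hlt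
  · exact hk'.1 k hlt
  · exact (hk.1 k' hlt).symm

lemma exists_stageGood_update (hvv : Injective vv)
    (hQ : ∀ n, Pairwise fun a b => EdgeDisjW (Q n a) (Q n b))
    (hhit : ∀ n m, n ≠ m → {a | vv m ∈ (Q n a).support}.Finite) (h : ℕ → ℕ) (t : ℕ)
    (hprev : ∀ s < t, StageGood vv Q h s) : ∃ a, StageGood vv Q (update h t a) t := by
  obtain ⟨m, rfl | rfl⟩ := Nat.even_or_odd' t
  · obtain ⟨n, hn⟩ := exists_vertexGood_update (Q := Q) hvv h m
    refine ⟨n, fun k hk => ?_, fun i j hij => absurd hij (spokeStage_ne_two_mul i j m)⟩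
    obtain rfl : k = m := by omega
    exact hn
  · have hst : spokeStage (Nat.unpair m).1 (Nat.unpair m).2 = 2 * m + 1 := by
      simp [spokeStage, Nat.pair_unpair]
    have hvertex : ∀ k, 2 * k < 2 * m + 1 → VertexGood vv Q h k :=
      fun k hk => (hprev _ hk).1 k rfl
    obtain ⟨a, ha⟩ := exists_spokeGood_update hQ hhit h _ _ fun k hk hki =>
      (hvertex k (hst ▸ hk)).ne (hvertex _ (hst ▸ two_mul_lt_spokeStage _ _)) hki
    refine ⟨a, fun k hk => absurd hk (by omega), fun i j hij => ?_⟩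
    obtain ⟨rfl, rfl⟩ := spokeStage_inj (hij.trans hst.symm)
    exact hst ▸ ha

theorem exists_spokes (hvv : Injective vv)
    (hQ : ∀ n, Pairwise fun a b => EdgeDisjW (Q n a) (Q n b))
    (hhit : ∀ n m, n ≠ m → {a | vv m ∈ (Q n a).support}.Finite) :
    ∃ (N : ℕ → ℕ) (S : ∀ i, ℕ → G.Walk (vv (N i)) x), Injective N ∧
      (∀ i j i' j', (i, j) ≠ (i', j') → EdgeDisjW (S i j) (S i' j')) ∧
      ∀ i j k, vv (N k) ∈ (S i j).support → k = i := by
  obtain ⟨h, hgood⟩ := exists_seq_forall_of_exists_update (StageGood vv Q)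
    (fun _ _ _ => StageGood.congr) (exists_stageGood_update hvv hQ hhit)
  have hvertex (k : ℕ) : VertexGood vv Q h k := (hgood (2 * k)).1 k rfl
  have hspoke (i j : ℕ) : SpokeGood vv Q h i j := (hgood _).2 i j rfl
  refine ⟨fun k => h (2 * k), spoke vv Q h,
    fun k k' hkk' => by_contra fun hne => (hvertex k).ne (hvertex k') hne hkk', ?_, ?_⟩
  · intro i j i' j' hne
    rcases lt_trichotomy (spokeStage i j) (spokeStage i' j') with hlt | heq | hgt
    · exact ((hspoke i' j').1 i j hlt).symm
    · obtain ⟨rfl, rfl⟩ := spokeStage_inj heq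
      exact absurd rfl hne
    · exact (hspoke i j).1 i' j' hgt
  · intro i j k hmem
    by_contra hki
    rcases (spokeStage_ne_two_mul i j k).lt_or_gt with hlt | hgt
    · exact (hvertex k).2 i j hlt hmem
    · exact (hspoke i j).2 k hgt hki hmem

end Spokes

theorem isStrongImmersion_top_of_spokes {x : V} {b : ℕ → V} (hb : Injective b)
    (S : ∀ i, ℕ → G.Walk (b i) x)
    (hS : ∀ i j i' j', (i, j) ≠ (i', j') → EdgeDisjW (S i j) (S i' j'))
    (hbS : ∀ i j k, b k ∈ (S i j).support → k = i) :
    ∃ P, IsStrongImmersion (⊤ : SimpleGraph ℕ) G b P := by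
  classical
  refine ⟨fun i j _ => ((S i j).append (S j i).reverse).bypass, ?_⟩
  have hedges (i j : ℕ) (e : Sym2 V) (he : e ∈ ((S i j).append (S j i).reverse).bypass.edges) :
      e ∈ (S i j).edges ∨ e ∈ (S j i).edges := by
    simpa using Walk.edges_bypass_subset_edges _ he
  refine ⟨hb, fun _ _ _ => Walk.bypass_isPath _, fun u v u' v' _ _ hne e he he' => ?_,
    fun u v _ w hw ⟨z, hz⟩ => ?_⟩
  · rcases hedges u v e he with h | h <;> rcases hedges u' v' e he' with h' | h' <;>
      refine hS _ _ _ _ (fun heq => hne ?_) e h h' <;> cases heq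
    exacts [rfl, Sym2.eq_swap, Sym2.eq_swap, rfl]
  · subst hz
    have hw' := Walk.support_bypass_subset_support _ hw
    simp only [Walk.mem_support_append_iff, Walk.support_reverse, List.mem_reverse] at hw'
    exact hw'.imp (fun h => congrArg b (hbS u v z h)) fun h => congrArg b (hbS v u z h)

end

/-- exactly one of the following holds: there is a strong
immersion of `K^{ℵ₀}` in `G` with at most one branch vertex in every
edge-block of `G − X`, or `G − X` has only finitely many edge-blocks. -/
theorem duality_for_edge_blocks {V : Type*} (G : SimpleGraph V)
    (hG : InfEdgeConn G) (X : Set V) (hX : X.Finite) :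
    Xor'
      (∃ (α : ℕ → V) (P : ∀ ⦃i j : ℕ⦄, (⊤ : SimpleGraph ℕ).Adj i j → G.Walk (α i) (α j)),
        IsStrongImmersion (⊤ : SimpleGraph ℕ) G α P ∧
        ∀ i j : ℕ, i ≠ j → ∀ (hi : α i ∈ (Xᶜ : Set V)) (hj : α j ∈ (Xᶜ : Set V)),
          ¬ FinEdgeConn (G.induce (Xᶜ : Set V)) ⟨α i, hi⟩ ⟨α j, hj⟩)
      ({C : Set ↥(Xᶜ : Set V) |
          ∃ v, C = {u | FinEdgeConn (G.induce (Xᶜ : Set V)) u v}}.Finite) := by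
  refine xor_iff_iff_not.2
    ⟨fun ⟨_, _, hα, hblocks⟩ => infinite_edgeBlocks_of_injective hX hα.1 hblocks, fun hinf => ?_⟩
  obtain ⟨w, x, hx, hw, hfan⟩ := exists_isEdgeFan_pool hX hG hinf
  choose Q hQ using hfan
  have hinj : Injective fun n => (w n : V) := fun m n hmn => by
    by_contra hne
    exact hw hne (Subtype.ext hmn ▸ .refl _)
  obtain ⟨N, S, hN, hS, hNS⟩ := exists_spokes hinj (fun n => (hQ n).2.1)
    fun n m hnm => (hQ n).finite_setOf_mem_support hx (hw hnm)
  obtain ⟨P, hP⟩ := isStrongImmersion_top_of_spokes (hinj.comp hN) S hS hNS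
  exact ⟨_, P, hP, fun i j hij _ _ => hw (hN.ne hij)⟩
end
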